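/- arXiv:2209.00075 — 3 statements merged into one kernel-verified Lean document; each statement's English description precedes it below -/
import Mathlib

section
/- Let D : ℝ^N → ℝ^{2N} be a linear map, M : ℝ be a nonnegative real number, and define G : ℝ^N → ℝ^N by G(h) = Dᵀ((|Dh|² − M²)⁺ · Dh), where (·)⁺ denotes the positive part and |·| the Euclidean norm. Then G is a monotone operator, i.e., ⟨G(h₁) − G(h₂), h₁ − h₂⟩ ≥ 0 for all h₁, h₂ ∈ ℝ^N. -/
/-!
Writing `a = f ‖u‖`, `b = f ‖v‖` with `a, b ≥ 0`, Cauchy–Schwarz gives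
`⟪a • u - b • v, u - v⟫ ≥ (a ‖u‖ - b ‖v‖) (‖u‖ - ‖v‖)`, which is nonnegative as soon as
`t ↦ f t * t` is monotone on `[0, ∞)`. For `f t = (t² - M²)⁺` this shows that
`x ↦ (|x|² - M²)⁺ • x` is monotone, and composing with `D` and its adjoint preserves monotonicity.
-/

open RealInnerProductSpace Set

theorem sub_mul_sub_nonneg_of_monotoneOn {g : ℝ → ℝ} (hg : MonotoneOn g (Ici 0))
    {s t : ℝ} (hs : 0 ≤ s) (ht : 0 ≤ t) : 0 ≤ (g s - g t) * (s - t) := by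
  rcases le_total t s with hts | hst
  · exact mul_nonneg (sub_nonneg.2 (hg ht hs hts)) (sub_nonneg.2 hts)
  · exact mul_nonneg_of_nonpos_of_nonpos (sub_nonpos.2 (hg hs ht hst)) (sub_nonpos.2 hst)

theorem inner_smul_norm_sub_smul_norm_nonneg {E : Type*} [NormedAddCommGroup E]
    [InnerProductSpace ℝ E] {f : ℝ → ℝ} (hf₀ : ∀ t, 0 ≤ t → 0 ≤ f t)
    (hf : MonotoneOn (fun t ↦ f t * t) (Ici 0)) (u v : E) :
    0 ≤ ⟪f ‖u‖ • u - f ‖v‖ • v, u - v⟫ := by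
  set a := f ‖u‖
  set b := f ‖v‖
  have hab : 0 ≤ a + b := add_nonneg (hf₀ _ (norm_nonneg u)) (hf₀ _ (norm_nonneg v))
  have hexpand : ⟪a • u - b • v, u - v⟫ = a * ‖u‖ ^ 2 + b * ‖v‖ ^ 2 - (a + b) * ⟪u, v⟫ := by
    simp only [inner_sub_left, inner_sub_right, real_inner_smul_left,
      real_inner_self_eq_norm_sq, real_inner_comm u v]
    ring
  calc 0 ≤ (a * ‖u‖ - b * ‖v‖) * (‖u‖ - ‖v‖) :=
        sub_mul_sub_nonneg_of_monotoneOn hf (norm_nonneg u) (norm_nonneg v)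
    _ = a * ‖u‖ ^ 2 + b * ‖v‖ ^ 2 - (a + b) * (‖u‖ * ‖v‖) := by ring
    _ ≤ a * ‖u‖ ^ 2 + b * ‖v‖ ^ 2 - (a + b) * ⟪u, v⟫ := by
        gcongr
        exact real_inner_le_norm u v
    _ = ⟪a • u - b • v, u - v⟫ := hexpand.symm

theorem monotoneOn_posPart_sq_sub_sq_mul (M : ℝ) :
    MonotoneOn (fun t : ℝ ↦ max (t ^ 2 - M ^ 2) 0 * t) (Ici 0) := by
  have hpos : MonotoneOn (fun t : ℝ ↦ max (t ^ 2 - M ^ 2) 0) (Ici 0) :=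
    fun s hs t _ hst ↦ max_le_max_right 0 (by gcongr)
  exact hpos.mul monotoneOn_id (fun _ _ ↦ le_max_right _ _) (fun _ ht ↦ ht)

theorem stmt0_general (N : ℕ)
    (D : EuclideanSpace ℝ (Fin N) →L[ℝ] EuclideanSpace ℝ (Fin (2 * N)))
    (M : ℝ)
    (G : EuclideanSpace ℝ (Fin N) → EuclideanSpace ℝ (Fin N))
    (hG : ∀ h, G h =
      ContinuousLinearMap.adjoint D ((max (‖D h‖ ^ 2 - M ^ 2) 0) • D h)) :
    ∀ h₁ h₂ : EuclideanSpace ℝ (Fin N), 0 ≤ ⟪G h₁ - G h₂, h₁ - h₂⟫ := by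
  intro h₁ h₂
  rw [hG, hG, ← map_sub, ContinuousLinearMap.adjoint_inner_left, map_sub]
  exact inner_smul_norm_sub_smul_norm_nonneg (fun _ _ ↦ le_max_right _ _)
    (monotoneOn_posPart_sq_sub_sq_mul M) (D h₁) (D h₂)

/-- monotonicity of `G h = Dᵀ((|Dh|² − M²)⁺ • Dh)`. -/
theorem stmt0 (N : ℕ)
    (D : EuclideanSpace ℝ (Fin N) →L[ℝ] EuclideanSpace ℝ (Fin (2 * N)))
    (M : ℝ) (hM : 0 ≤ M)
    (G : EuclideanSpace ℝ (Fin N) → EuclideanSpace ℝ (Fin N))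
    (hG : ∀ h, G h =
      ContinuousLinearMap.adjoint D ((max (‖D h‖ ^ 2 - M ^ 2) 0) • D h)) :
    ∀ h₁ h₂ : EuclideanSpace ℝ (Fin N), 0 ≤ ⟪G h₁ - G h₂, h₁ - h₂⟫ :=
  stmt0_general N D M G hG
end

section
/- Let K ⊆ ℝ^N be closed and convex, let f : (0,T) → ℝ^N be integrable, and suppose y₁, y₂ : [0,T] → ℝ^N are absolutely continuous (with L² derivatives), take values in K, satisfy y₁(0) = y₂(0), and each yᵢ satisfies ⟨yᵢ'(t) − f(t), v − yᵢ(t)⟩ ≥ 0 for all v ∈ K and a.e. t. Then y₁ = y₂ on [0,T]. -/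
/-!
Put `w = y₁ - y₂`. Testing the inequality for `y₁` with `v = y₂` and the one for `y₂` with
`v = y₁` gives `⟪w', w⟫ ≤ 0` a.e. Since `w 0 = 0`, the energy identity
`‖w t‖² = 2 ∫₀ᵗ ⟪w', w⟫` then forces `w t = 0`.

The energy identity holds for the primitive of any integrable `G`, by Fubini: `‖∫ G‖²` is the
integral of `⟪G s, G u⟫` over a square, and by the symmetry `(s, u) ↦ (u, s)` the two triangles
on either side of the (null) diagonal contribute equally.
-/

open RealInnerProductSpace MeasureTheory Filter Topology Set

section
variable {E : Type*} [NormedAddCommGroup E] [InnerProductSpace ℝ E]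

lemma inner_sub_sub_nonpos_of_forall_inner_nonneg {K : Set E} {a b c x y : E}
    (hx : x ∈ K) (hy : y ∈ K) (ha : ∀ v ∈ K, 0 ≤ ⟪a - c, v - x⟫)
    (hb : ∀ v ∈ K, 0 ≤ ⟪b - c, v - y⟫) : ⟪a - b, x - y⟫ ≤ 0 := by
  have hay := ha y hy
  have hbx := hb x hx
  simp only [inner_sub_left, inner_sub_right] at hay hbx ⊢
  linarith

variable {μ : Measure ℝ} {G : ℝ → E}

lemma integrable_inner_prod (hG : Integrable G μ) :
    Integrable (fun p : ℝ × ℝ ↦ ⟪G p.1, G p.2⟫) (μ.prod μ) :=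
  (hG.norm.mul_prod hG.norm).mono' (hG.1.comp_fst.inner hG.1.comp_snd)
    (Eventually.of_forall fun _ ↦ norm_inner_le_norm _ _)

variable [SFinite μ]

lemma setIntegral_inner_upper_eq_lower :
    ∫ p in {p : ℝ × ℝ | p.1 ≤ p.2}, ⟪G p.1, G p.2⟫ ∂(μ.prod μ)
      = ∫ p in {p : ℝ × ℝ | p.2 ≤ p.1}, ⟪G p.1, G p.2⟫ ∂(μ.prod μ) := by
  rw [← integral_indicator (measurableSet_le measurable_fst measurable_snd),
    ← integral_indicator (measurableSet_le measurable_snd measurable_fst),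
    ← integral_prod_swap]
  congr 1 with p
  simp only [indicator, mem_ofPred_eq, Prod.fst_swap, Prod.snd_swap, real_inner_comm]

variable [CompleteSpace E]

lemma setIntegral_inner_prod {S : Set (ℝ × ℝ)} (hS : MeasurableSet S) (hG : Integrable G μ) :
    ∫ p in S, ⟪G p.1, G p.2⟫ ∂(μ.prod μ)
      = ∫ s, ⟪G s, ∫ u in Prod.mk s ⁻¹' S, G u ∂μ⟫ ∂μ := by
  rw [← integral_indicator hS, integral_prod _ ((integrable_inner_prod hG).indicator hS)]
  congr 1 with s
  rw [← integral_inner hG.integrableOn, ← integral_indicator (measurable_prodMk_left hS)]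
  congr 1 with u

lemma norm_sq_integral_eq_two_mul_integral_inner [NullSingletonClass μ] (hG : Integrable G μ) :
    ‖∫ u, G u ∂μ‖ ^ 2 = 2 * ∫ s, ⟪G s, ∫ u in Iic s, G u ∂μ⟫ ∂μ := by
  have hlt : MeasurableSet {p : ℝ × ℝ | p.2 < p.1} :=
    measurableSet_lt measurable_snd measurable_fst
  have hle : MeasurableSet {p : ℝ × ℝ | p.2 ≤ p.1} :=
    measurableSet_le measurable_snd measurable_fst
  have hcompl : {p : ℝ × ℝ | p.2 < p.1}ᶜ = {p | p.1 ≤ p.2} := by ext; simp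
  have hdiag : ∀ s, Prod.mk s ⁻¹' {p : ℝ × ℝ | p.2 < p.1} =ᵐ[μ] Prod.mk s ⁻¹' {p | p.2 ≤ p.1} :=
    fun _ ↦ Iio_ae_eq_Iic
  calc ‖∫ u, G u ∂μ‖ ^ 2 = ∫ p, ⟪G p.1, G p.2⟫ ∂(μ.prod μ) := by
        rw [← real_inner_self_eq_norm_sq, integral_prod _ (integrable_inner_prod hG),
          ← integral_inner hG]
        congr 1 with s
        exact (real_inner_comm _ _).trans (integral_inner hG _).symm
    _ = ∫ p in {p : ℝ × ℝ | p.2 < p.1}, ⟪G p.1, G p.2⟫ ∂(μ.prod μ)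
        + ∫ p in {p : ℝ × ℝ | p.2 < p.1}ᶜ, ⟪G p.1, G p.2⟫ ∂(μ.prod μ) :=
      (integral_add_compl hlt (integrable_inner_prod hG)).symm
    _ = 2 * ∫ s, ⟪G s, ∫ u in Iic s, G u ∂μ⟫ ∂μ := by
      rw [hcompl, setIntegral_inner_upper_eq_lower, setIntegral_inner_prod hlt hG,
        setIntegral_inner_prod hle hG, two_mul]
      simp_rw [setIntegral_congr_set (hdiag _)]
      rfl

lemma norm_sq_intervalIntegral_eq_two_mul_integral_inner {a b : ℝ} (hab : a ≤ b)
    (hG : IntervalIntegrable G volume a b) :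
    ‖∫ u in a..b, G u‖ ^ 2 = 2 * ∫ s in a..b, ⟪G s, ∫ u in a..s, G u⟫ := by
  rw [intervalIntegral.integral_of_le hab, intervalIntegral.integral_of_le hab,
    norm_sq_integral_eq_two_mul_integral_inner hG.1]
  congr 1
  refine setIntegral_congr_fun measurableSet_Ioc fun s hs ↦ ?_
  rw [Measure.restrict_restrict measurableSet_Iic, Iic_inter_Ioc_of_le hs.2,
    intervalIntegral.integral_of_le hs.1.le]

end

theorem stmt4_general (N : ℕ) (T : ℝ)
    (K : Set (EuclideanSpace ℝ (Fin N)))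
    (f y₁ y₂ g₁ g₂ : ℝ → EuclideanSpace ℝ (Fin N))
    (hg₁ : IntervalIntegrable g₁ volume 0 T)
    (hg₂ : IntervalIntegrable g₂ volume 0 T)
    (hy₁ : ∀ t ∈ Set.Icc (0 : ℝ) T, y₁ t = y₁ 0 + ∫ s in (0 : ℝ)..t, g₁ s)
    (hy₂ : ∀ t ∈ Set.Icc (0 : ℝ) T, y₂ t = y₂ 0 + ∫ s in (0 : ℝ)..t, g₂ s)
    (hmem₁ : ∀ t ∈ Set.Icc (0 : ℝ) T, y₁ t ∈ K)
    (hmem₂ : ∀ t ∈ Set.Icc (0 : ℝ) T, y₂ t ∈ K)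
    (h0 : y₁ 0 = y₂ 0)
    (hVI₁ : ∀ᵐ t ∂(volume.restrict (Set.Ioo (0 : ℝ) T)),
      ∀ v ∈ K, 0 ≤ ⟪g₁ t - f t, v - y₁ t⟫)
    (hVI₂ : ∀ᵐ t ∂(volume.restrict (Set.Ioo (0 : ℝ) T)),
      ∀ v ∈ K, 0 ≤ ⟪g₂ t - f t, v - y₂ t⟫) :
    ∀ t ∈ Set.Icc (0 : ℝ) T, y₁ t = y₂ t := by
  intro t ht
  have hsub : ∀ s ∈ Icc 0 T, uIcc 0 s ⊆ uIcc 0 T := fun s hs ↦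
    uIcc_subset_uIcc_left (mem_uIcc_of_le hs.1 hs.2)
  have hdiff : ∀ s ∈ Icc 0 T, y₁ s - y₂ s = ∫ u in 0..s, (g₁ u - g₂ u) := fun s hs ↦ by
    rw [hy₁ s hs, hy₂ s hs, h0, intervalIntegral.integral_sub (hg₁.mono_set (hsub s hs))
      (hg₂.mono_set (hsub s hs))]
    abel
  have hmono : ∀ᵐ s ∂volume.restrict (Ioc 0 t),
      ⟪g₁ s - g₂ s, ∫ u in 0..s, (g₁ u - g₂ u)⟫ ≤ 0 := by
    rw [Measure.restrict_congr_set Ioo_ae_eq_Ioc.symm]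
    filter_upwards [ae_restrict_of_ae_restrict_of_subset (Ioo_subset_Ioo_right ht.2) hVI₁,
      ae_restrict_of_ae_restrict_of_subset (Ioo_subset_Ioo_right ht.2) hVI₂,
      ae_restrict_mem measurableSet_Ioo] with s h₁ h₂ hs
    have hs' : s ∈ Icc 0 T := ⟨hs.1.le, hs.2.le.trans ht.2⟩
    rw [← hdiff s hs']
    exact inner_sub_sub_nonpos_of_forall_inner_nonneg (hmem₁ s hs') (hmem₂ s hs') h₁ h₂
  have henergy : ‖y₁ t - y₂ t‖ ^ 2 ≤ 0 := by
    rw [hdiff t ht, norm_sq_intervalIntegral_eq_two_mul_integral_inner ht.1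
      ((hg₁.sub hg₂).mono_set (hsub t ht)), intervalIntegral.integral_of_le ht.1]
    exact mul_nonpos_of_nonneg_of_nonpos zero_le_two (integral_nonpos_of_ae hmono)
  simpa [sub_eq_zero] using henergy

/-- uniqueness of absolutely continuous solutions of the variational
inequality `⟨y'(t) − f(t), v − y(t)⟩ ≥ 0` over a closed convex set `K`, with the
same initial value. -/
theorem stmt4 (N : ℕ) (T : ℝ) (hT : 0 < T)
    (K : Set (EuclideanSpace ℝ (Fin N)))
    (hKne : K.Nonempty) (hKcl : IsClosed K) (hKcv : Convex ℝ K)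
    (f y₁ y₂ g₁ g₂ : ℝ → EuclideanSpace ℝ (Fin N))
    (hf : IntervalIntegrable f volume 0 T)
    (hg₁ : IntervalIntegrable g₁ volume 0 T)
    (hg₂ : IntervalIntegrable g₂ volume 0 T)
    (hg₁L2 : MemLp g₁ 2 (volume.restrict (Set.Ioc 0 T)))
    (hg₂L2 : MemLp g₂ 2 (volume.restrict (Set.Ioc 0 T)))
    (hy₁ : ∀ t ∈ Set.Icc (0 : ℝ) T, y₁ t = y₁ 0 + ∫ s in (0 : ℝ)..t, g₁ s)
    (hy₂ : ∀ t ∈ Set.Icc (0 : ℝ) T, y₂ t = y₂ 0 + ∫ s in (0 : ℝ)..t, g₂ s)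
    (hmem₁ : ∀ t ∈ Set.Icc (0 : ℝ) T, y₁ t ∈ K)
    (hmem₂ : ∀ t ∈ Set.Icc (0 : ℝ) T, y₂ t ∈ K)
    (h0 : y₁ 0 = y₂ 0)
    (hVI₁ : ∀ᵐ t ∂(volume.restrict (Set.Ioo (0 : ℝ) T)),
      ∀ v ∈ K, 0 ≤ ⟪g₁ t - f t, v - y₁ t⟫)
    (hVI₂ : ∀ᵐ t ∂(volume.restrict (Set.Ioo (0 : ℝ) T)),
      ∀ v ∈ K, 0 ≤ ⟪g₂ t - f t, v - y₂ t⟫) :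
    ∀ t ∈ Set.Icc (0 : ℝ) T, y₁ t = y₂ t :=
  stmt4_general N T K f y₁ y₂ g₁ g₂ hg₁ hg₂ hy₁ hy₂ hmem₁ hmem₂ h0 hVI₁ hVI₂
end

section
/- In the setting of the Leray–Schauder fixed point argument: if y ∈ C([0,T]; ℝ^N) is absolutely continuous with y(0) = λ y₀ and y'(t) = λ f(t) − γλ F(y(t)) a.e. for some λ ∈ (0,1), where ⟨F(h), h⟩ ≥ 0 for all h, then sup_{t∈[0,T]} ‖y(t)‖ ≤ ‖y₀‖ + ∫₀ᵀ ‖f(s)‖ ds. In particular, the set of all such fixed-point candidates y = λΛ(y), λ ∈ (0,1), is bounded in C([0,T]; ℝ^N) uniformly in λ and γ. -/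
/-!
For `ε > 0` the regularized energy `φ = √(‖y‖² + ε²)` is absolutely continuous along the
solution, and almost everywhere `φ' = ⟪y, y'⟫ / φ ≤ λ ‖f‖`, because the dissipative term
`-γλ ⟪y, F y⟫` is nonpositive and `‖y‖ ≤ φ`. Integrating `φ'` (the fundamental theorem of calculus
for absolutely continuous functions) gives `‖y t‖ ≤ λ ‖y₀‖ + ε + λ ∫₀ᵗ ‖f‖`; let `ε → 0`.
-/

open RealInnerProductSpace MeasureTheory Filter Set

theorem AbsolutelyContinuousOnInterval.of_dist_le_dist {X : Type*} [PseudoMetricSpace X]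
    {f : ℝ → X} {G : ℝ → ℝ} {a b : ℝ} (hG : AbsolutelyContinuousOnInterval G a b)
    (hfG : ∀ s ∈ uIcc a b, ∀ t ∈ uIcc a b, dist (f s) (f t) ≤ dist (G s) (G t)) :
    AbsolutelyContinuousOnInterval f a b := by
  rw [absolutelyContinuousOnInterval_iff] at hG ⊢
  intro ε hε
  obtain ⟨δ, hδ, hGδ⟩ := hG ε hε
  exact ⟨δ, hδ, fun E hE hEδ =>
    (Finset.sum_le_sum fun i hi => hfG _ (hE.1 i hi).1 _ (hE.1 i hi).2).trans_lt (hGδ E hE hEδ)⟩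

theorem dist_sqrt_norm_sq_add_le {E : Type*} [SeminormedAddCommGroup E] {c : ℝ} (hc : 0 ≤ c)
    (u v : E) : dist √(‖u‖ ^ 2 + c) √(‖v‖ ^ 2 + c) ≤ dist u v := by
  have hprod : ‖u‖ * ‖v‖ + c ≤ √(‖u‖ ^ 2 + c) * √(‖v‖ ^ 2 + c) := by
    rw [← Real.sqrt_mul (by positivity)]
    apply Real.le_sqrt_of_sq_le
    nlinarith [sq_nonneg (‖u‖ - ‖v‖)]
  have hsq : (√(‖u‖ ^ 2 + c) - √(‖v‖ ^ 2 + c)) ^ 2 ≤ (‖u‖ - ‖v‖) ^ 2 := by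
    nlinarith [Real.sq_sqrt (by positivity : 0 ≤ ‖u‖ ^ 2 + c),
      Real.sq_sqrt (by positivity : 0 ≤ ‖v‖ ^ 2 + c)]
  rw [Real.dist_eq, dist_eq_norm]
  exact (sq_le_sq.1 hsq).trans (abs_norm_sub_norm_le u v)

section NormedSpace

variable {E : Type*} [NormedAddCommGroup E] [NormedSpace ℝ E] {y g : ℝ → E} {a b : ℝ}

theorem dist_le_dist_integral_norm_of_eq_add_integral (hg : IntervalIntegrable g volume a b)
    (hy : ∀ t ∈ Icc a b, y t = y a + ∫ s in a..t, g s) :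
    ∀ s ∈ Icc a b, ∀ t ∈ Icc a b,
      dist (y s) (y t) ≤ dist (∫ r in a..s, ‖g r‖) (∫ r in a..t, ‖g r‖) := by
  intro s hs t ht
  have hgi : ∀ x ∈ Icc a b, IntervalIntegrable g volume a x := fun x hx =>
    hg.mono_set (uIcc_subset_uIcc left_mem_uIcc (Icc_subset_uIcc hx))
  rw [dist_comm, dist_eq_norm, hy s hs, hy t ht, add_sub_add_left_eq_sub,
    intervalIntegral.integral_interval_sub_left (hgi t ht) (hgi s hs), dist_comm, Real.dist_eq,
    intervalIntegral.integral_interval_sub_left (hgi t ht).norm (hgi s hs).norm]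
  exact intervalIntegral.norm_integral_le_abs_integral_norm

theorem ae_hasDerivAt_of_eq_add_integral [CompleteSpace E]
    (hg : IntervalIntegrable g volume a b)
    (hy : ∀ t ∈ Icc a b, y t = y a + ∫ s in a..t, g s) :
    ∀ᵐ t, t ∈ Ioo a b → HasDerivAt y (g t) t := by
  filter_upwards [hg.ae_hasDerivAt_integral] with t hderiv ht
  have hIoo : Ioo a b ⊆ uIcc a b := Ioo_subset_Icc_self.trans Icc_subset_uIcc
  exact ((hderiv (hIoo ht) a left_mem_uIcc).const_add (y a)).congr_of_eventuallyEq
    (eventually_of_mem (Icc_mem_nhds ht.1 ht.2) hy)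

end NormedSpace

section InnerProductSpace

variable {E : Type*} [NormedAddCommGroup E] [InnerProductSpace ℝ E]

theorem real_inner_sub_smul_le_of_inner_nonneg {h v w : E} {μ : ℝ} (hμ : 0 ≤ μ)
    (hw : 0 ≤ ⟪w, h⟫) : ⟪h, v - μ • w⟫ ≤ ‖h‖ * ‖v‖ := by
  rw [inner_sub_right, real_inner_smul_right, real_inner_comm w]
  nlinarith [real_inner_le_norm h v, mul_nonneg hμ hw]

theorem HasDerivAt.sqrt_norm_sq_add {y : ℝ → E} {y' : E} {t c : ℝ} (hy : HasDerivAt y y' t)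
    (hc : 0 < c) :
    HasDerivAt (fun s => √(‖y s‖ ^ 2 + c)) (⟪y t, y'⟫ / √(‖y t‖ ^ 2 + c)) t := by
  convert (hy.norm_sq.add_const c).sqrt (by positivity) using 1
  rw [mul_div_mul_left _ _ two_ne_zero]

variable [CompleteSpace E] {y g : ℝ → E} {a b : ℝ}

theorem norm_le_norm_add_integral_of_inner_le (hab : a ≤ b) (hg : IntervalIntegrable g volume a b)
    (hy : ∀ t ∈ Icc a b, y t = y a + ∫ s in a..t, g s) {k : ℝ → ℝ}
    (hk : IntervalIntegrable k volume a b) (hk₀ : ∀ᵐ s, s ∈ Icc a b → 0 ≤ k s)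
    (hyg : ∀ᵐ s, s ∈ Icc a b → ⟪y s, g s⟫ ≤ ‖y s‖ * k s) :
    ‖y b‖ ≤ ‖y a‖ + ∫ s in a..b, k s := by
  refine le_of_forall_pos_le_add fun ε hε => ?_
  set φ : ℝ → ℝ := fun s => √(‖y s‖ ^ 2 + ε ^ 2)
  have hφ_pos : ∀ s, 0 < φ s := fun s => Real.sqrt_pos.2 (by positivity)
  have hnorm_le_φ : ∀ s, ‖y s‖ ≤ φ s := fun s =>
    Real.le_sqrt_of_sq_le (le_add_of_nonneg_right (sq_nonneg ε))
  have hφ_ac : AbsolutelyContinuousOnInterval φ a b := by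
    refine (hg.norm.absolutelyContinuousOnInterval_intervalIntegral left_mem_uIcc).of_dist_le_dist
      fun s hs t ht => (dist_sqrt_norm_sq_add_le (sq_nonneg ε) _ _).trans ?_
    rw [uIcc_of_le hab] at hs ht
    exact dist_le_dist_integral_norm_of_eq_add_integral hg hy s hs t ht
  have hφ_deriv : ∀ᵐ s ∂volume.restrict (Icc a b), deriv φ s ≤ k s := by
    rw [← restrict_Ioo_eq_restrict_Icc, ae_restrict_iff' measurableSet_Ioo]
    filter_upwards [ae_hasDerivAt_of_eq_add_integral hg hy, hk₀, hyg] with s hderiv hks hygs hs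
    rw [((hderiv hs).sqrt_norm_sq_add (by positivity)).deriv, div_le_iff₀ (hφ_pos s)]
    have hs' := Ioo_subset_Icc_self hs
    nlinarith [hygs hs', mul_le_mul_of_nonneg_left (hnorm_le_φ s) (hks hs')]
  have hφ_a : φ a ≤ ‖y a‖ + ε := Real.sqrt_le_iff.2 ⟨by positivity, by nlinarith [norm_nonneg (y a)]⟩
  calc ‖y b‖ ≤ φ b := hnorm_le_φ b
    _ = φ a + ∫ s in a..b, deriv φ s := by rw [hφ_ac.integral_deriv_eq_sub]; ring
    _ ≤ φ a + ∫ s in a..b, k s := by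
      gcongr
      exact intervalIntegral.integral_mono_ae_restrict hab hφ_ac.intervalIntegrable_deriv hk hφ_deriv
    _ ≤ ‖y a‖ + (∫ s in a..b, k s) + ε := by linarith

theorem norm_le_norm_add_integral_of_inner_le_of_mem_Icc (hg : IntervalIntegrable g volume a b)
    (hy : ∀ t ∈ Icc a b, y t = y a + ∫ s in a..t, g s) {k : ℝ → ℝ}
    (hk : IntervalIntegrable k volume a b) (hk₀ : ∀ᵐ s, s ∈ Icc a b → 0 ≤ k s)
    (hyg : ∀ᵐ s, s ∈ Icc a b → ⟪y s, g s⟫ ≤ ‖y s‖ * k s) {t : ℝ} (ht : t ∈ Icc a b) :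
    ‖y t‖ ≤ ‖y a‖ + ∫ s in a..t, k s := by
  have hIcc : Icc a t ⊆ Icc a b := Icc_subset_Icc_right ht.2
  have huIcc : uIcc a t ⊆ uIcc a b := uIcc_subset_uIcc left_mem_uIcc (Icc_subset_uIcc ht)
  exact norm_le_norm_add_integral_of_inner_le ht.1 (hg.mono_set huIcc) (fun s hs => hy s (hIcc hs))
    (hk.mono_set huIcc) (hk₀.mono fun s h hs => h (hIcc hs)) (hyg.mono fun s h hs => h (hIcc hs))

end InnerProductSpace

theorem stmt18_general (N : ℕ) (T γ lam : ℝ) (hγ : 0 < γ)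
    (hlam : lam ∈ Set.Ioo (0 : ℝ) 1)
    (F : EuclideanSpace ℝ (Fin N) → EuclideanSpace ℝ (Fin N))
    (hFc : Continuous F)
    (hFpos : ∀ h, 0 ≤ ⟪F h, h⟫)
    (f : ℝ → EuclideanSpace ℝ (Fin N))
    (hfi : IntervalIntegrable f volume 0 T)
    (y₀ : EuclideanSpace ℝ (Fin N)) (y : ℝ → EuclideanSpace ℝ (Fin N))
    (hyc : Continuous y)
    (hy : ∀ t ∈ Set.Icc (0 : ℝ) T,
      y t = lam • y₀ + ∫ s in (0 : ℝ)..t, (lam • f s - (γ * lam) • F (y s))) :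
    ∀ t ∈ Set.Icc (0 : ℝ) T, ‖y t‖ ≤ ‖y₀‖ + ∫ s in (0 : ℝ)..T, ‖f s‖ := by
  intro t ht
  obtain ⟨hlam₀, hlam₁⟩ := hlam
  have hy₀ : y 0 = lam • y₀ := by simpa using hy 0 ⟨le_rfl, ht.1.trans ht.2⟩
  have hg : IntervalIntegrable (fun s => lam • f s - (γ * lam) • F (y s)) volume 0 T :=
    (hfi.smul lam).sub (((hFc.comp hyc).const_smul (γ * lam)).intervalIntegrable 0 T)
  have hyg : ∀ s, ⟪y s, lam • f s - (γ * lam) • F (y s)⟫ ≤ ‖y s‖ * (lam * ‖f s‖) := fun s => by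
    simpa [norm_smul, abs_of_pos hlam₀] using
      real_inner_sub_smul_le_of_inner_nonneg (v := lam • f s) (by positivity) (hFpos (y s))
  have hfi_mono : ∫ s in (0 : ℝ)..t, ‖f s‖ ≤ ∫ s in (0 : ℝ)..T, ‖f s‖ :=
    intervalIntegral.integral_mono_interval le_rfl ht.1 ht.2
      (ae_of_all _ fun _ => norm_nonneg _) hfi.norm
  calc ‖y t‖ ≤ ‖y 0‖ + ∫ s in (0 : ℝ)..t, lam * ‖f s‖ :=
        norm_le_norm_add_integral_of_inner_le_of_mem_Icc hg (hy₀ ▸ hy) (hfi.norm.const_mul lam)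
          (ae_of_all _ fun s _ => by positivity) (ae_of_all _ fun s _ => hyg s) ht
    _ = lam * (‖y₀‖ + ∫ s in (0 : ℝ)..t, ‖f s‖) := by
      rw [hy₀, norm_smul, Real.norm_of_nonneg hlam₀.le, intervalIntegral.integral_const_mul]
      ring
    _ ≤ ‖y₀‖ + ∫ s in (0 : ℝ)..T, ‖f s‖ := by
      have hint_nonneg : 0 ≤ ∫ s in (0 : ℝ)..t, ‖f s‖ :=
        intervalIntegral.integral_nonneg ht.1 fun _ _ => norm_nonneg _
      nlinarith [norm_nonneg y₀]

/-- Leray–Schauder a priori bound: any solution of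
`y(0) = λ y₀`, `y' = λ f − γ λ F(y)` with `λ ∈ (0,1)` and `⟨F(h),h⟩ ≥ 0` satisfies
`sup_{[0,T]} ‖y‖ ≤ ‖y₀‖ + ∫₀ᵀ ‖f‖`, uniformly in `λ` and `γ`. -/
theorem stmt18 (N : ℕ) (T γ lam : ℝ) (hT : 0 < T) (hγ : 0 < γ)
    (hlam : lam ∈ Set.Ioo (0 : ℝ) 1)
    (F : EuclideanSpace ℝ (Fin N) → EuclideanSpace ℝ (Fin N))
    (hFc : Continuous F)
    (hFpos : ∀ h, 0 ≤ ⟪F h, h⟫)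
    (f : ℝ → EuclideanSpace ℝ (Fin N))
    (hfi : IntervalIntegrable f volume 0 T)
    (hfn : IntervalIntegrable (fun s => ‖f s‖) volume 0 T)
    (y₀ : EuclideanSpace ℝ (Fin N)) (y : ℝ → EuclideanSpace ℝ (Fin N))
    (hyc : Continuous y)
    (hy : ∀ t ∈ Set.Icc (0 : ℝ) T,
      y t = lam • y₀ + ∫ s in (0 : ℝ)..t, (lam • f s - (γ * lam) • F (y s))) :
    ∀ t ∈ Set.Icc (0 : ℝ) T, ‖y t‖ ≤ ‖y₀‖ + ∫ s in (0 : ℝ)..T, ‖f s‖ :=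
  stmt18_general N T γ lam hγ hlam F hFc hFpos f hfi y₀ y hyc hy
end
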